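/- Under the conditions of the previous bounds with θ fixed (θ ≥ 1), SURE(s,θ)/(2σ²) → 1 as s → ∞; i.e., the component-wise SURE of the horseshoe regression converges to 2σ² as the scaled signal s = α̂²d²/(2σ²) tends to infinity, provided τ² ≤ d^{-2}. -/

import Mathlib

open MeasureTheory Set Filter

noncomputable def hsW (θ s z : ℝ) : ℝ :=
  (1 - z) ^ (-(1/2) : ℝ) * (θ + (1 - θ) * z)⁻¹ * Real.exp (-s * z)

noncomputable def hsE (θ s : ℝ) (k : ℕ) : ℝ :=
  (∫ z in Ioo (0:ℝ) 1, z ^ k * hsW θ s z) / (∫ z in Ioo (0:ℝ) 1, hsW θ s z)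

noncomputable def hsSURE (σ θ s : ℝ) : ℝ :=
  2 * σ ^ 2 * (1 - hsE θ s 1 + 2 * s * hsE θ s 2 - s * (hsE θ s 1) ^ 2)

/-!
For `θ ≥ 1` the factor `(θ + (1 - θ) z)⁻¹` lies in `[θ⁻¹, 1]`, so the weight is squeezed
between `θ⁻¹ e^{-sz}` and `(1 - z)^{-1/2} e^{-sz}`. The normalising integral is therefore at
least `θ⁻¹ (1 - e^{-s}) / s`, while splitting `(0, 1)` at `1/2` bounds `∫ z^k W` by
`2 k! / s^{k+1}` plus a multiple of `e^{-s/2}`. Hence `E(Z^k) = O(s^{-k})`, and each of `E Z`,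
`s E Z²` and `s (E Z)²` in `SURE / (2σ²) = 1 - E Z + 2 s E Z² - s (E Z)²` is `O(1/s)`.
-/

open Real Asymptotics Topology

lemma integrableOn_one_sub_rpow_Ioo {r : ℝ} (hr : -1 < r) :
    IntegrableOn (fun z : ℝ => (1 - z) ^ r) (Ioo 0 1) := by
  have h :=
    ((intervalIntegral.intervalIntegrable_rpow' hr (a := 0) (b := 1)).comp_sub_left 1).symm
  rw [sub_self, sub_zero, intervalIntegrable_iff_integrableOn_Ioo_of_le zero_le_one] at h
  exact h

lemma integral_exp_neg_mul_Ioo {s : ℝ} (hs : s ≠ 0) :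
    ∫ z in Ioo (0:ℝ) 1, exp (-s * z) = (1 - exp (-s)) / s := by
  rw [← integral_Ioc_eq_integral_Ioo, ← intervalIntegral.integral_of_le zero_le_one,
    intervalIntegral.integral_comp_mul_left exp (neg_ne_zero.mpr hs), integral_exp,
    smul_eq_mul, mul_one, mul_zero, exp_zero]
  field_simp
  ring

lemma integral_pow_mul_exp_neg_mul_Ioi (k : ℕ) {s : ℝ} (hs : 0 < s) :
    ∫ z in Ioi (0:ℝ), z ^ k * exp (-s * z) = k.factorial / s ^ (k + 1) := by
  have h := Real.integral_rpow_mul_exp_neg_mul_Ioi (a := k + 1) (by positivity) hs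
  rw [add_sub_cancel_right, Gamma_nat_eq_factorial, ← Nat.cast_succ, rpow_natCast] at h
  rw [div_eq_mul_inv, mul_comm, ← one_div, ← one_div_pow, ← h]
  refine setIntegral_congr_fun measurableSet_Ioi fun z _ => ?_
  simp [rpow_natCast]

lemma integrableOn_pow_mul_exp_neg_mul_Ioi (k : ℕ) {s : ℝ} (hs : 0 < s) :
    IntegrableOn (fun z : ℝ => z ^ k * exp (-s * z)) (Ioi 0) := by
  have h := integrableOn_rpow_mul_exp_neg_mul_rpow (s := k) (p := 1)
    (neg_one_lt_zero.trans_le k.cast_nonneg) one_pos hs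
  refine h.congr_fun (fun z _ => ?_) measurableSet_Ioi
  simp [rpow_natCast]

lemma exp_neg_half_isBigO_inv_pow (k : ℕ) :
    (fun s : ℝ => exp (-(s / 2))) =O[atTop] fun s => s⁻¹ ^ k := by
  have h := ((isLittleO_pow_exp_pos_mul_atTop k (b := 1 / 2) (by norm_num)).isBigO.inv_rev
    (by filter_upwards [eventually_gt_atTop 0] with s hs h using absurd h (by positivity)))
  refine (h.congr (fun s => ?_) (fun s => ?_))
  · rw [← exp_neg]; ring_nf
  · exact (inv_pow s k).symm

section Weight

variable {θ s z : ℝ}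

lemma one_le_hsW_denom (hθ : 1 ≤ θ) (hz : z ∈ Ioo (0:ℝ) 1) : 1 ≤ θ + (1 - θ) * z := by
  nlinarith [hz.1, hz.2]

lemma hsW_denom_le (hθ : 1 ≤ θ) (hz : z ∈ Ioo (0:ℝ) 1) : θ + (1 - θ) * z ≤ θ := by
  nlinarith [hz.1, hz.2]

lemma one_le_one_sub_rpow_neg_half (hz : z ∈ Ioo (0:ℝ) 1) : 1 ≤ (1 - z) ^ (-(1/2) : ℝ) :=
  one_le_rpow_of_pos_of_le_one_of_nonpos (by linarith [hz.2]) (by linarith [hz.1]) (by norm_num)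

lemma hsW_nonneg (hθ : 1 ≤ θ) (hz : z ∈ Ioo (0:ℝ) 1) : 0 ≤ hsW θ s z := by
  have := one_le_hsW_denom hθ hz
  have := one_le_one_sub_rpow_neg_half hz
  unfold hsW
  exact mul_nonneg (mul_nonneg (by linarith) (inv_nonneg.mpr (by linarith))) (exp_nonneg _)

lemma hsW_le (hθ : 1 ≤ θ) (hz : z ∈ Ioo (0:ℝ) 1) :
    hsW θ s z ≤ (1 - z) ^ (-(1/2) : ℝ) * exp (-s * z) := by
  have h := inv_le_one_of_one_le₀ (one_le_hsW_denom hθ hz)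
  have hmaj := zero_le_one.trans (one_le_one_sub_rpow_neg_half hz)
  unfold hsW
  gcongr
  exact mul_le_of_le_one_right hmaj h

lemma inv_mul_exp_le_hsW (hθ : 1 ≤ θ) (hz : z ∈ Ioo (0:ℝ) 1) :
    θ⁻¹ * exp (-s * z) ≤ hsW θ s z := by
  have hq := one_le_hsW_denom hθ hz
  have h := inv_anti₀ (by linarith) (hsW_denom_le hθ hz)
  have := one_le_one_sub_rpow_neg_half hz
  unfold hsW
  gcongr
  calc θ⁻¹ ≤ 1 * (θ + (1 - θ) * z)⁻¹ := by rwa [one_mul]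
    _ ≤ _ := by gcongr

lemma measurable_hsW : Measurable (hsW θ s) := by
  unfold hsW
  fun_prop

lemma pow_mul_hsW_le (k : ℕ) (hθ : 1 ≤ θ) (hs : 0 ≤ s) (hz : z ∈ Ioo (0:ℝ) 1) :
    z ^ k * hsW θ s z ≤
      2 * (z ^ k * exp (-s * z)) + exp (-(s / 2)) * (1 - z) ^ (-(1/2) : ℝ) := by
  have hW := hsW_le (s := s) hθ hz
  have hmaj := zero_le_one.trans (one_le_one_sub_rpow_neg_half hz)
  have hzk : 0 ≤ z ^ k := pow_nonneg hz.1.le k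
  rcases le_or_gt z (1/2) with hz2 | hz2
  · have hm : (1 - z) ^ (-(1/2) : ℝ) ≤ 2 := calc
        (1 - z) ^ (-(1/2) : ℝ) ≤ (1 - z) ^ (-1 : ℝ) :=
          rpow_le_rpow_of_exponent_ge (by linarith [hz.2]) (by linarith [hz.1]) (by norm_num)
        _ = (1 - z)⁻¹ := rpow_neg_one _
        _ ≤ 2 := inv_le_of_inv_le₀ two_pos (by linarith)
    calc z ^ k * hsW θ s z ≤ z ^ k * (2 * exp (-s * z)) := by
          gcongr
          exact hW.trans (by gcongr)
      _ ≤ _ := by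
          have : 0 ≤ exp (-(s / 2)) * (1 - z) ^ (-(1/2) : ℝ) := by positivity
          linarith
  · have hexp : exp (-s * z) ≤ exp (-(s / 2)) := exp_le_exp.mpr (by nlinarith)
    calc z ^ k * hsW θ s z ≤ 1 * ((1 - z) ^ (-(1/2) : ℝ) * exp (-(s / 2))) :=
          mul_le_mul (pow_le_one₀ hz.1.le hz.2.le) (hW.trans (by gcongr))
            (hsW_nonneg hθ hz) zero_le_one
      _ ≤ _ := by
          have : 0 ≤ z ^ k * exp (-s * z) := by positivity
          linarith

lemma integrableOn_pow_mul_hsW (k : ℕ) (hθ : 1 ≤ θ) (hs : 0 ≤ s) :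
    IntegrableOn (fun z => z ^ k * hsW θ s z) (Ioo 0 1) := by
  refine (integrableOn_one_sub_rpow_Ioo (r := -(1/2)) (by norm_num)).mono'
    ((measurable_id.pow_const k).mul measurable_hsW).aestronglyMeasurable ?_
  filter_upwards [ae_restrict_mem measurableSet_Ioo] with z hz
  rw [norm_of_nonneg (mul_nonneg (pow_nonneg hz.1.le k) (hsW_nonneg hθ hz))]
  have hexp : exp (-s * z) ≤ 1 := exp_le_one_iff.mpr (by nlinarith [hz.1])
  have hmaj := zero_le_one.trans (one_le_one_sub_rpow_neg_half hz)
  calc z ^ k * hsW θ s z ≤ 1 * ((1 - z) ^ (-(1/2) : ℝ) * 1) :=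
        mul_le_mul (pow_le_one₀ hz.1.le hz.2.le)
          ((hsW_le hθ hz).trans (mul_le_mul_of_nonneg_left hexp hmaj))
          (hsW_nonneg hθ hz) zero_le_one
    _ = _ := by ring

end Weight

section Asymptotics

variable {θ : ℝ}

lemma integral_pow_mul_hsW_le (k : ℕ) (hθ : 1 ≤ θ) {s : ℝ} (hs : 0 < s) :
    ∫ z in Ioo (0:ℝ) 1, z ^ k * hsW θ s z ≤
      2 * k.factorial * s⁻¹ ^ (k + 1) +
        (∫ z in Ioo (0:ℝ) 1, (1 - z) ^ (-(1/2) : ℝ)) * exp (-(s / 2)) := by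
  have hexp := integrableOn_pow_mul_exp_neg_mul_Ioi k hs
  have hmaj := integrableOn_one_sub_rpow_Ioo (r := -(1/2)) (by norm_num)
  have hIoi : ∫ z in Ioo (0:ℝ) 1, z ^ k * exp (-s * z) ≤
      ∫ z in Ioi (0:ℝ), z ^ k * exp (-s * z) :=
    setIntegral_mono_set hexp
      (by filter_upwards [ae_restrict_mem measurableSet_Ioi] with z hz
          using mul_nonneg (pow_nonneg (le_of_lt hz) k) (exp_nonneg _))
      Ioo_subset_Ioi_self.eventuallyLE
  have hexp' := (hexp.mono_set (Ioo_subset_Ioi_self : Ioo (0:ℝ) 1 ⊆ Ioi 0)).const_mul 2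
  calc ∫ z in Ioo (0:ℝ) 1, z ^ k * hsW θ s z
      ≤ ∫ z in Ioo (0:ℝ) 1,
          (2 * (z ^ k * exp (-s * z)) + exp (-(s / 2)) * (1 - z) ^ (-(1/2) : ℝ)) :=
        setIntegral_mono_on (integrableOn_pow_mul_hsW k hθ hs.le)
          (hexp'.add (hmaj.const_mul _)) measurableSet_Ioo
          fun z hz => pow_mul_hsW_le k hθ hs.le hz
    _ = 2 * (∫ z in Ioo (0:ℝ) 1, z ^ k * exp (-s * z)) +
          (∫ z in Ioo (0:ℝ) 1, (1 - z) ^ (-(1/2) : ℝ)) * exp (-(s / 2)) := by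
        rw [integral_add hexp' (hmaj.const_mul _), integral_const_mul, integral_const_mul,
          mul_comm (exp _)]
    _ ≤ 2 * (∫ z in Ioi (0:ℝ), z ^ k * exp (-s * z)) +
          (∫ z in Ioo (0:ℝ) 1, (1 - z) ^ (-(1/2) : ℝ)) * exp (-(s / 2)) := by
        gcongr
    _ = _ := by
        rw [integral_pow_mul_exp_neg_mul_Ioi k hs, div_eq_mul_inv, ← inv_pow, mul_assoc]

lemma integral_pow_mul_hsW_isBigO_inv_pow (k : ℕ) (hθ : 1 ≤ θ) :
    (fun s => ∫ z in Ioo (0:ℝ) 1, z ^ k * hsW θ s z) =O[atTop] fun s => s⁻¹ ^ (k + 1) := by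
  have hbound := ((isBigO_refl (fun s : ℝ => s⁻¹ ^ (k + 1)) atTop).const_mul_left
    (2 * k.factorial)).add ((exp_neg_half_isBigO_inv_pow (k + 1)).const_mul_left
    (∫ z in Ioo (0:ℝ) 1, (1 - z) ^ (-(1/2) : ℝ)))
  refine (IsBigO.of_norm_eventuallyLE ?_).trans hbound
  filter_upwards [eventually_gt_atTop 0] with s hs
  rw [norm_of_nonneg (setIntegral_nonneg measurableSet_Ioo fun z hz =>
    mul_nonneg (pow_nonneg hz.1.le k) (hsW_nonneg hθ hz))]
  exact integral_pow_mul_hsW_le k hθ hs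

lemma inv_integral_hsW_isBigO (hθ : 1 ≤ θ) :
    (fun s => (∫ z in Ioo (0:ℝ) 1, hsW θ s z)⁻¹) =O[atTop] fun s => s := by
  have hlim : Tendsto (fun s : ℝ => θ * (1 - exp (-s))⁻¹) atTop (𝓝 (θ * (1 - 0)⁻¹)) :=
    (((tendsto_exp_neg_atTop_nhds_zero).const_sub 1).inv₀ (by norm_num)).const_mul θ
  refine (IsBigO.of_norm_eventuallyLE ?_).trans
    (((hlim.isBigO_one ℝ).mul (isBigO_refl (fun s : ℝ => s) atTop)).congr_right one_mul)
  filter_upwards [eventually_gt_atTop 0] with s hs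
  have hL : 0 < (1 - exp (-s)) / s :=
    div_pos (sub_pos.mpr (exp_lt_one_iff.mpr (neg_lt_zero.mpr hs))) hs
  have hD : θ⁻¹ * ((1 - exp (-s)) / s) ≤ ∫ z in Ioo (0:ℝ) 1, hsW θ s z := by
    rw [← integral_exp_neg_mul_Ioo hs.ne', ← integral_const_mul]
    have hexp : IntegrableOn (fun z => θ⁻¹ * exp (-s * z)) (Ioo (0:ℝ) 1) :=
      (Continuous.integrableOn_Icc (by fun_prop)).mono_set Ioo_subset_Icc_self
    exact setIntegral_mono_on hexp (by simpa using integrableOn_pow_mul_hsW 0 hθ hs.le)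
      measurableSet_Ioo fun z hz => inv_mul_exp_le_hsW hθ hz
  have hc : 0 < θ⁻¹ * ((1 - exp (-s)) / s) := mul_pos (inv_pos.mpr (by linarith)) hL
  calc ‖(∫ z in Ioo (0:ℝ) 1, hsW θ s z)⁻¹‖
      = (∫ z in Ioo (0:ℝ) 1, hsW θ s z)⁻¹ :=
        norm_of_nonneg (inv_nonneg.mpr (hc.trans_le hD).le)
    _ ≤ (θ⁻¹ * ((1 - exp (-s)) / s))⁻¹ := inv_anti₀ hc hD
    _ = θ * (1 - exp (-s))⁻¹ * s := by
        rw [mul_inv, inv_inv, inv_div, div_eq_mul_inv, mul_assoc, mul_comm s]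

lemma hsE_isBigO_inv_pow (k : ℕ) (hθ : 1 ≤ θ) :
    (fun s => hsE θ s k) =O[atTop] fun s => s⁻¹ ^ k := by
  have h := (integral_pow_mul_hsW_isBigO_inv_pow k hθ).mul (inv_integral_hsW_isBigO hθ)
  refine (h.congr_left fun s => (div_eq_mul_inv _ _).symm).trans_eventuallyEq ?_
  filter_upwards [eventually_ne_atTop 0] with s hs
  rw [pow_succ, mul_assoc, inv_mul_cancel₀ hs, mul_one]

end Asymptotics

lemma tendsto_mul_of_isBigO_inv_sq {f : ℝ → ℝ} (hf : f =O[atTop] fun s => s⁻¹ ^ 2) :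
    Tendsto (fun s => s * f s) atTop (𝓝 0) := by
  refine (((isBigO_refl (fun s : ℝ => s) atTop).mul hf).trans_eventuallyEq ?_).trans_tendsto
    tendsto_inv_atTop_zero
  filter_upwards [eventually_ne_atTop 0] with s hs
  rw [sq, ← mul_assoc, mul_inv_cancel₀ hs, one_mul]

/-- As `s → ∞` with `θ ≥ 1` fixed (i.e. `τ² ≤ d⁻²`), the component-wise SURE of the
horseshoe regression satisfies `SURE/(2σ²) → 1`, i.e. `SURE → 2σ²`. -/
theorem stmt12 (σ θ : ℝ) (hσ : 0 < σ) (hθ : 1 ≤ θ) :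
    Tendsto (fun s => hsSURE σ θ s / (2 * σ ^ 2)) atTop (nhds 1) := by
  have hE₁ : Tendsto (fun s => hsE θ s 1) atTop (𝓝 0) :=
    (hsE_isBigO_inv_pow 1 hθ).trans_tendsto (by simpa using tendsto_inv_atTop_zero)
  have hE₁sq : (fun s => hsE θ s 1 ^ 2) =O[atTop] fun s => s⁻¹ ^ 2 := by
    simpa using (hsE_isBigO_inv_pow 1 hθ).pow 2
  have h := ((hE₁.const_sub 1).add
    ((tendsto_mul_of_isBigO_inv_sq (hsE_isBigO_inv_pow 2 hθ)).const_mul 2)).sub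
    (tendsto_mul_of_isBigO_inv_sq hE₁sq)
  rw [sub_zero, mul_zero, add_zero, sub_zero] at h
  refine h.congr fun s => ?_
  rw [hsSURE, mul_div_cancel_left₀ _ (by positivity)]
  ring
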